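/- arXiv:2504.00675 — 2 statements merged into one kernel-verified Lean document; each statement's English description precedes it below -/
import Mathlib

section
/- Let (X, p) be an asymmetrically normed space, f : X → ℝ ∪ {+∞} proper, x ∈ X, φ ∈ X̄*, g = f − φ. Suppose f is weakly lower semicontinuous at x, f* is right Gâteaux differentiable at φ with derivative the evaluation map of x, and there is a sequence (y_n) with g(y_n) → inf g and y_n → x weakly in X. Then g(x) = inf g(X) and every sequence (y_n) with g(y_n) → g(x) converges weakly to x in the conjugate space X̄, i.e. lim sup_{n} ψ(y_n − x) ≤ 0 for all ψ ∈ X̄*. -/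
open Filter Topology

/-- The topology induced by an asymmetric norm `p`. -/
def ballTopology {X : Type*} [AddCommGroup X] [Module ℝ X] (p : X → ℝ) : TopologicalSpace X :=
  TopologicalSpace.generateFrom
    {s : Set X | ∃ (x : X) (r : ℝ), 0 < r ∧ s = {y : X | p (y - x) < r}}

/-- The dual cone `X*` of `(X, p)`. -/
def dualCone {X : Type*} [AddCommGroup X] [Module ℝ X] (p : X → ℝ) : Set (X →ₗ[ℝ] ℝ) :=
  {φ | ∃ C : ℝ, 0 ≤ C ∧ ∀ y : X, φ y ≤ C * p y}

/-- The dual cone `X̄*` of the conjugate space `(X, p̄)`, `p̄ x = p (-x)`. -/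
def dualConeBar {X : Type*} [AddCommGroup X] [Module ℝ X] (p : X → ℝ) : Set (X →ₗ[ℝ] ℝ) :=
  {φ | ∃ C : ℝ, 0 ≤ C ∧ ∀ y : X, φ y ≤ C * p (-y)}

/-- The cone norm on `X̄*`: `‖ψ‖ = sup {ψ y : p (-y) < 1}`. -/
noncomputable def dualNormBar {X : Type*} [AddCommGroup X] [Module ℝ X] (p : X → ℝ)
    (φ : X →ₗ[ℝ] ℝ) : ℝ :=
  sSup ((fun y => φ y) '' {y : X | p (-y) < 1})

/-- The convex conjugate `f*(φ) = sup_x [φ x − f x]`. -/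
noncomputable def conjFn {X : Type*} [AddCommGroup X] [Module ℝ X]
    (f : X → EReal) (φ : X →ₗ[ℝ] ℝ) : EReal :=
  ⨆ x : X, ((φ x : EReal) - f x)


private lemma ereal_sub_coe_ne_bot {w : EReal} (hw : w ≠ ⊥) (r : ℝ) :
    w - (r : EReal) ≠ ⊥ := by
  induction w with
  | bot => exact absurd rfl hw
  | coe c => rw [← EReal.coe_sub]; exact EReal.coe_ne_bot _
  | top => rw [EReal.top_sub_coe]; exact top_ne_bot

private lemma ereal_sub_coe_eq_neg {w : EReal} (hw : w ≠ ⊥) (r : ℝ) :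
    w - (r : EReal) = -((r : EReal) - w) := by
  induction w with
  | bot => exact absurd rfl hw
  | coe c => rw [← EReal.coe_sub, ← EReal.coe_sub, ← EReal.coe_neg]; norm_num
  | top => simp [EReal.top_sub_coe]

private lemma ereal_iInf_neg {ι : Sort*} (h : ι → EReal) : ⨅ i, -h i = -⨆ i, h i := by
  apply le_antisymm
  · exact EReal.le_neg_of_le_neg (iSup_le fun i => EReal.le_neg_of_le_neg (iInf_le _ i))
  · exact le_iInf fun i => EReal.neg_le_neg_iff.2 (le_iSup h i)

private lemma real_limsup_nonpos {u : ℕ → ℝ}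
    (h : ∀ ε : ℝ, 0 < ε → ∀ᶠ n in atTop, u n ≤ ε) : Filter.limsup u atTop ≤ 0 := by
  rw [Filter.limsup_eq]
  by_cases hb : BddBelow {a : ℝ | ∀ᶠ n in atTop, u n ≤ a}
  · by_contra h0
    push_neg at h0
    have h1 := csInf_le hb (h (sInf {a : ℝ | ∀ᶠ n in atTop, u n ≤ a} / 2) (by linarith))
    linarith
  · rw [Real.sInf_of_not_bddBelow hb]

/-- Gâteaux case, (i) ⟹ (ii): if `f` is weakly (sequentially) lower
semicontinuous at `x`, `f*` is right Gâteaux differentiable at `φ` with derivative the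
evaluation map of `x`, and some minimising sequence of `g = f − φ` converges weakly to `x`
in `X`, then `g` attains its infimum at `x` and every minimising sequence converges weakly
to `x` in the conjugate space `X̄`, i.e. `limsup ψ (y_n − x) ≤ 0` for all `ψ ∈ X̄*`. -/
theorem stmt12 {X : Type*} [AddCommGroup X] [Module ℝ X] (p : X → ℝ)
    (hp0 : ∀ x : X, 0 ≤ p x)
    (hpz : ∀ x : X, (p x = 0 ∧ p (-x) = 0) ↔ x = 0)
    (hph : ∀ (r : ℝ) (x : X), 0 ≤ r → p (r • x) = r * p x)
    (hpt : ∀ x y : X, p (x + y) ≤ p x + p y)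
    (f : X → EReal) (hfbot : ∀ y : X, f y ≠ ⊥) (hfne : ∃ y : X, f y ≠ ⊤)
    (x : X) (φ : X →ₗ[ℝ] ℝ) (hφ : φ ∈ dualConeBar p)
    (g : X → EReal) (hg : ∀ y : X, g y = f y - (φ y : EReal))
    (hwlsc : ∀ y : ℕ → X,
      (∀ χ ∈ dualCone p, Filter.limsup (fun n => χ (y n - x)) atTop ≤ 0) →
      f x ≤ Filter.liminf (fun n => f (y n)) atTop)
    (hreal : ∃ a : ℝ, conjFn f φ = (a : EReal))
    (hGateaux : ∀ ψ ∈ dualConeBar p, ∀ ε : ℝ, 0 < ε → ∃ δ : ℝ, 0 < δ ∧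
      ∀ t : ℝ, 0 < t → t < δ →
        conjFn f (φ + t • ψ) - conjFn f φ ≤ ((t * (ψ x + ε) : ℝ) : EReal) ∧
        ((t * (ψ x - ε) : ℝ) : EReal) ≤ conjFn f (φ + t • ψ) - conjFn f φ)
    (hseq : ∃ y : ℕ → X, Tendsto (fun n => g (y n)) atTop (nhds (⨅ z : X, g z)) ∧
      ∀ χ ∈ dualCone p, Filter.limsup (fun n => χ (y n - x)) atTop ≤ 0) :
    g x = ⨅ z : X, g z ∧
    ∀ y : ℕ → X, Tendsto (fun n => g (y n)) atTop (nhds (g x)) →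
      ∀ ψ ∈ dualConeBar p, Filter.limsup (fun n => ψ (y n - x)) atTop ≤ 0 := by
  classical
  obtain ⟨a, ha⟩ := hreal
  -- The infimum of g is -a
  have hinf : (⨅ z : X, g z) = ((-a : ℝ) : EReal) := by
    have h1 : ∀ z, g z = -(((φ z : ℝ) : EReal) - f z) := fun z => by
      rw [hg z]; exact ereal_sub_coe_eq_neg (hfbot z) _
    calc (⨅ z : X, g z) = ⨅ z : X, -(((φ z : ℝ) : EReal) - f z) := iInf_congr h1
      _ = -⨆ z : X, (((φ z : ℝ) : EReal) - f z) := ereal_iInf_neg _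
      _ = -(a : EReal) := by rw [← ha]; rfl
      _ = ((-a : ℝ) : EReal) := (EReal.coe_neg a).symm
  -- expressing f at points where g is finite
  have hfy_eq : ∀ z : X, g z ≠ ⊤ → f z = (((g z).toReal + φ z : ℝ) : EReal) := by
    intro z hz
    have hgz := hg z
    have hft : f z ≠ ⊤ := fun h => hz (by rw [hgz, h, EReal.top_sub_coe])
    lift f z to ℝ using ⟨hft, hfbot z⟩ with c hc
    rw [← EReal.coe_sub] at hgz
    rw [hgz, EReal.toReal_coe, EReal.coe_eq_coe_iff]
    ring
  -- toReal convergence for minimising sequences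
  have htr : ∀ y : ℕ → X, Tendsto (fun n => g (y n)) atTop (𝓝 ((-a : ℝ) : EReal)) →
      (∀ᶠ n in atTop, g (y n) = (((g (y n)).toReal : ℝ) : EReal)) ∧
      Tendsto (fun n => (g (y n)).toReal) atTop (𝓝 (-a)) := by
    intro y hy
    have hlt : ∀ᶠ n in atTop, g (y n) < ⊤ := hy.eventually_lt_const (EReal.coe_lt_top _)
    have hgt : ∀ᶠ n in atTop, (⊥ : EReal) < g (y n) := hy.eventually_const_lt (EReal.bot_lt_coe _)
    have heq : ∀ᶠ n in atTop, g (y n) = (((g (y n)).toReal : ℝ) : EReal) := by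
      filter_upwards [hlt, hgt] with n h1 h2
      exact (EReal.coe_toReal h1.ne h2.ne').symm
    refine ⟨heq, ?_⟩
    rw [← EReal.tendsto_coe]
    exact Filter.Tendsto.congr' heq hy
  -- KEY: eventual bound for minimising sequences
  have key : ∀ y : ℕ → X, Tendsto (fun n => g (y n)) atTop (𝓝 ((-a : ℝ) : EReal)) →
      ∀ ψ ∈ dualConeBar p, ∀ ε : ℝ, 0 < ε → ∀ᶠ n in atTop, ψ (y n - x) ≤ ε := by
    intro y hy ψ hψ ε hε
    obtain ⟨heq, hr⟩ := htr y hy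
    obtain ⟨δ, hδ, hδ'⟩ := hGateaux ψ hψ (ε / 2) (by linarith)
    set t := δ / 2 with ht
    have ht0 : 0 < t := by positivity
    obtain ⟨hup, -⟩ := hδ' t ht0 (by rw [ht]; linarith)
    have hconj : conjFn f (φ + t • ψ) ≤ ((a + t * (ψ x + ε / 2) : ℝ) : EReal) := by
      rw [ha] at hup
      calc conjFn f (φ + t • ψ)
          = conjFn f (φ + t • ψ) - (a : EReal) + (a : EReal) := EReal.sub_add_cancel.symm
        _ ≤ ((t * (ψ x + ε / 2) : ℝ) : EReal) + (a : EReal) := add_le_add_left hup _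
        _ = ((a + t * (ψ x + ε / 2) : ℝ) : EReal) := by
            rw [← EReal.coe_add]; norm_num [add_comm]
    have hsmall : ∀ᶠ n in atTop, (g (y n)).toReal ≤ -a + t * (ε / 2) :=
      (hr.eventually_lt_const (show (-a : ℝ) < -a + t * (ε / 2) by nlinarith)).mono
        fun n h => h.le
    filter_upwards [heq, hsmall] with n h1 h4
    set r := (g (y n)).toReal with hrdef
    have hfyn : f (y n) = ((r + φ (y n) : ℝ) : EReal) := by
      refine hfy_eq (y n) ?_
      rw [h1]; exact EReal.coe_ne_top _
    have hle : ((φ (y n) + t * ψ (y n) - (r + φ (y n)) : ℝ) : EReal) ≤ conjFn f (φ + t • ψ) := by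
      have h5 : ((((φ + t • ψ) (y n) : ℝ)) : EReal) - f (y n) ≤ conjFn f (φ + t • ψ) :=
        le_iSup (fun z => (((φ + t • ψ) z : ℝ) : EReal) - f z) (y n)
      rw [hfyn, ← EReal.coe_sub] at h5
      simpa [LinearMap.add_apply, LinearMap.smul_apply, smul_eq_mul] using h5
    have h6 : φ (y n) + t * ψ (y n) - (r + φ (y n)) ≤ a + t * (ψ x + ε / 2) :=
      EReal.coe_le_coe_iff.1 (hle.trans hconj)
    have h9 : t * (ψ (y n) - ψ x) ≤ t * ε := by nlinarith
    have := le_of_mul_le_mul_left h9 ht0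
    rw [map_sub]; linarith
  -- part 1
  obtain ⟨y, hy1, hy2⟩ := hseq
  rw [hinf] at hy1
  obtain ⟨heq, hr⟩ := htr y hy1
  have hgx_le : g x ≤ ((-a : ℝ) : EReal) := by
    have hbound : ∀ ε : ℝ, 0 < ε → g x ≤ ((-a + 2 * ε : ℝ) : EReal) := by
      intro ε hε
      have hφev : ∀ᶠ n in atTop, φ (y n - x) ≤ ε := key y hy1 φ hφ ε hε
      have hsm : ∀ᶠ n in atTop, (g (y n)).toReal ≤ -a + ε :=
        (hr.eventually_lt_const (show (-a : ℝ) < -a + ε by linarith)).mono fun n h => h.le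
      have hfq : ∀ᶠ n in atTop, f (y n) ≤ ((-a + φ x + 2 * ε : ℝ) : EReal) := by
        filter_upwards [heq, hsm, hφev] with n h1 h2 h3
        rw [hfy_eq (y n) (by rw [h1]; exact EReal.coe_ne_top _), EReal.coe_le_coe_iff]
        rw [map_sub] at h3
        linarith
      have hlim : Filter.liminf (fun n => f (y n)) atTop ≤ ((-a + φ x + 2 * ε : ℝ) : EReal) :=
        le_trans Filter.liminf_le_limsup (Filter.limsup_le_of_le (by isBoundedDefault) hfq)
      have h9 : f x ≤ ((-a + φ x + 2 * ε : ℝ) : EReal) := (hwlsc y hy2).trans hlim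
      rw [hg x]
      calc f x - (φ x : EReal)
          ≤ ((-a + φ x + 2 * ε : ℝ) : EReal) - ((φ x : ℝ) : EReal) :=
            EReal.sub_le_sub h9 le_rfl
        _ = ((-a + 2 * ε : ℝ) : EReal) := by rw [← EReal.coe_sub, EReal.coe_eq_coe_iff]; ring
    have hgtop : g x ≠ ⊤ := by
      intro h
      have := hbound 1 one_pos
      rw [h] at this
      exact (EReal.coe_lt_top _).not_ge this
    have hgbot : g x ≠ ⊥ := by rw [hg x]; exact ereal_sub_coe_ne_bot (hfbot x) _
    have hc : g x = (((g x).toReal : ℝ) : EReal) := (EReal.coe_toReal hgtop hgbot).symm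
    rw [hc, EReal.coe_le_coe_iff]
    by_contra h0
    push_neg at h0
    have h1 := hbound (((g x).toReal + a) / 4) (by linarith)
    rw [hc, EReal.coe_le_coe_iff] at h1
    simp only [EReal.toReal_coe] at h1
    linarith
  have part1 : g x = ⨅ z : X, g z :=
    le_antisymm (by rw [hinf]; exact hgx_le) (iInf_le _ x)
  refine ⟨part1, fun y' hy' ψ hψ => ?_⟩
  rw [part1, hinf] at hy'
  exact real_limsup_nonpos fun ε hε => key y' hy' ψ hψ ε hε
end

section
/- Let X = ℓ² with asymmetric norm p(x) = (Σ_n max{0, x_n}²)^{1/2}, p̄(x) = p(−x), f(x) = p̄(x)², and fix y ∈ ℓ² with y_n < 0 for all n. Define g(x) = p̄(x)² − ⟨y, x⟩. Then for every x ∈ ℓ², g(x) ≥ p̄(x − y/2)² − p̄(y)²/4, the infimum of g equals −p̄(y)²/4 and is attained at y/2, and every minimising sequence (x_n) of g satisfies p̄(x_n − y/2) → 0. -/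
open Filter Topology ENNReal

/-- `p̄(x)² = Σ_n max {0, −x_n}²` on `ℓ²`, the square of the conjugate asymmetric norm. -/
noncomputable def pbarSq (x : lp (fun _ : ℕ => ℝ) 2) : ℝ :=
  ∑' n : ℕ, max 0 (-(x n)) ^ 2

lemma summable_pbar (x : lp (fun _ : ℕ => ℝ) 2) :
    Summable fun n => max 0 (-(x n)) ^ 2 := by
  have hp : (0:ℝ) < ENNReal.toReal 2 := by norm_num
  have h := (lp.memℓp x).summable hp
  refine Summable.of_nonneg_of_le (fun n => by positivity) (fun n => ?_) h
  have h1 : max 0 (-(x n)) ≤ |x n| := by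
    rcases le_total 0 (x n) with h|h <;> simp [abs_of_nonneg, abs_of_nonpos, h] <;> linarith
  have h2 : (0:ℝ) ≤ max 0 (-(x n)) := le_max_left _ _
  calc max 0 (-(x n)) ^ 2 ≤ |x n| ^ 2 := by nlinarith [abs_nonneg (x n)]
    _ = ‖x n‖ ^ (2:ℝ≥0∞).toReal := by simp [Real.norm_eq_abs]

lemma pbar_nonneg (x : lp (fun _ : ℕ => ℝ) 2) : 0 ≤ pbarSq x :=
  tsum_nonneg fun n => by positivity

lemma key (a b : ℝ) (hb : b < 0) :
    max 0 (-(a - 2⁻¹ * b)) ^ 2 - b ^ 2 / 4 ≤ max 0 (-a) ^ 2 - b * a := by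
  rcases le_total 0 a with h|h
  · rw [max_eq_left (by linarith), max_eq_left (by linarith)]
    nlinarith
  · rcases le_total 0 (a - 2⁻¹*b) with h2|h2
    · rw [max_eq_left (by linarith), max_eq_right (by linarith)]
      nlinarith
    · rw [max_eq_right (by linarith), max_eq_right (by linarith)]
      nlinarith

/-- with `g(x) = p̄(x)² − ⟨y,x⟩` for `y ∈ ℓ²` with all coordinates negative:
`g(x) ≥ p̄(x − y/2)² − p̄(y)²/4`, the infimum of `g` is `−p̄(y)²/4`, attained at `y/2`, and
every minimising sequence `(x_n)` satisfies `p̄(x_n − y/2) → 0`. -/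
theorem stmt18 (y : lp (fun _ : ℕ => ℝ) 2) (hy : ∀ n : ℕ, y n < 0)
    (g : lp (fun _ : ℕ => ℝ) 2 → ℝ)
    (hgdef : ∀ x : lp (fun _ : ℕ => ℝ) 2, g x = pbarSq x - inner (𝕜 := ℝ) y x) :
    (∀ x : lp (fun _ : ℕ => ℝ) 2,
      pbarSq (x - (2⁻¹ : ℝ) • y) - pbarSq y / 4 ≤ g x) ∧
    g ((2⁻¹ : ℝ) • y) = -(pbarSq y) / 4 ∧
    (∀ x : lp (fun _ : ℕ => ℝ) 2, -(pbarSq y) / 4 ≤ g x) ∧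
    (∀ x : ℕ → lp (fun _ : ℕ => ℝ) 2,
      Tendsto (fun n => g (x n)) atTop (nhds (-(pbarSq y) / 4)) →
      Tendsto (fun n => Real.sqrt (pbarSq (x n - (2⁻¹ : ℝ) • y))) atTop (nhds 0)) := by
  have hpy : pbarSq y = ∑' n, (y n)^2 := by
    unfold pbarSq
    congr 1; ext n
    rw [max_eq_right (by linarith [hy n])]; ring
  have hinner : ∀ x : lp (fun _ : ℕ => ℝ) 2,
      (inner (𝕜 := ℝ) y x : ℝ) = ∑' n, y n * x n := by
    intro x; rw [lp.inner_eq_tsum]; exact tsum_congr fun i => by simp [mul_comm]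
  have hsub : ∀ (x : lp (fun _ : ℕ => ℝ) 2) (n : ℕ),
      (x - (2⁻¹ : ℝ) • y) n = x n - 2⁻¹ * y n := by
    intro x n; simp [lp.coeFn_sub, lp.coeFn_smul]; exact rfl
  have h1 : ∀ x : lp (fun _ : ℕ => ℝ) 2,
      pbarSq (x - (2⁻¹ : ℝ) • y) - pbarSq y / 4 ≤ g x := by
    intro x
    rw [hgdef, hinner]
    have hs1 := summable_pbar (x - (2⁻¹ : ℝ) • y)
    have hs2 := summable_pbar x
    have hs3 : Summable fun n => y n * x n := by
      have := lp.summable_inner (𝕜 := ℝ) y x; exact this.congr fun i => by simp [mul_comm]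
    have hsy : Summable fun n => (y n)^2 / 4 := by
      have := summable_pbar y
      simp only [fun n => max_eq_right (by linarith [hy n] : -(y n) ≥ 0)] at this
      have h2 : Summable fun n => (y n)^2 := by
        refine this.congr fun n => by ring
      exact h2.div_const 4
    unfold pbarSq
    have hysum : (∑' n : ℕ, max 0 (-(y n)) ^ 2) / 4 = ∑' n, (y n)^2 / 4 := by
      rw [show (fun n : ℕ => max 0 (-(y n)) ^ 2) = fun n => (y n)^2 from
        funext fun n => by rw [max_eq_right (by linarith [hy n])]; ring, tsum_div_const]
    rw [hysum, ← Summable.tsum_sub hs1 hsy, ← Summable.tsum_sub hs2 hs3]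
    refine Summable.tsum_le_tsum (fun n => ?_) (hs1.sub hsy) (hs2.sub hs3)
    rw [hsub]
    exact key (x n) (y n) (hy n)
  have h2 : g ((2⁻¹ : ℝ) • y) = -(pbarSq y) / 4 := by
    rw [hgdef, hinner]
    have hsm : ∀ n : ℕ, ((2⁻¹ : ℝ) • y) n = 2⁻¹ * y n := fun n => by
      simp [lp.coeFn_smul]
    have hps : pbarSq ((2⁻¹ : ℝ) • y) = ∑' n, (y n)^2 / 4 := by
      unfold pbarSq
      congr 1; ext n
      rw [hsm, max_eq_right (by linarith [hy n])]; ring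
    have hq : Summable fun n => (y n)^2 := by
      have := summable_pbar y
      refine this.congr fun n => ?_
      rw [max_eq_right (by linarith [hy n])]; ring
    have hin : (∑' n, y n * ((2⁻¹:ℝ) • y) n) = ∑' n, (y n)^2 / 2 := by
      congr 1; ext n; rw [hsm]; ring
    rw [hps, hin, hpy, tsum_div_const, tsum_div_const]
    ring
  have h3 : ∀ x : lp (fun _ : ℕ => ℝ) 2, -(pbarSq y) / 4 ≤ g x := by
    intro x
    have := h1 x
    have := pbar_nonneg (x - (2⁻¹ : ℝ) • y)
    linarith
  refine ⟨h1, h2, h3, ?_⟩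
  intro x hx
  have hsq : Tendsto (fun n => pbarSq (x n - (2⁻¹ : ℝ) • y)) atTop (nhds 0) := by
    have hub : Tendsto (fun n => g (x n) + pbarSq y / 4) atTop (nhds 0) := by
      have := hx.add_const (pbarSq y / 4)
      convert this using 2
      ring
    refine squeeze_zero (fun n => pbar_nonneg _) (fun n => ?_) hub
    have := h1 (x n); linarith
  have : Tendsto (fun n => Real.sqrt (pbarSq (x n - (2⁻¹ : ℝ) • y))) atTop (nhds (Real.sqrt 0)) :=
    (Real.continuous_sqrt.tendsto 0).comp hsq
  simpa using this
end
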